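/- Fix a finite set S ⊆ ℝ and an integer i ≥ 1. Let N be the FS^op-module over ℚ with N(E) the free ℚ-vector space on {v : E → S | v is not identically zero} and pullback N(φ)(w) = w ∘ φ for surjections φ. Then for every nonempty finite type E, the i-fold tensor power N(E)^{⊗ i} is spanned by the set of elements of the form (N(φ)(y₁)) ⊗ ⋯ ⊗ (N(φ)(y_i)), where φ : E → F ranges over surjections onto nonempty finite types F with |F| ≤ |S|^i and y₁, …, y_i ∈ N(F). In other words, the i-th pointwise tensor power of N is finitely generated in degrees ≤ |S|^i. -/

import Mathlib

open CategoryTheory Opposite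

/-- An object of the category `FS`: a nonempty finite type. -/
structure FSObj : Type 1 where
  carrier : Type
  [fintype : Fintype carrier]
  [nonempty : Nonempty carrier]

attribute [instance] FSObj.fintype FSObj.nonempty

/-- The category `FS` of nonempty finite types with surjections. -/
instance : Category FSObj where
  Hom A B := {f : A.carrier → B.carrier // Function.Surjective f}
  id A := ⟨id, Function.surjective_id⟩
  comp f g := ⟨g.1 ∘ f.1, g.2.comp f.2⟩

/-- An `FSᵒᵖ`-module `N` over `ℚ` is generated in degrees `≤ m` if for every
object `E` of `FS`, the vector space `N(E)` is spanned by the images of the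
pullback maps `N(φ) : N(F) → N(E)` over all surjections `φ : E → F` with `|F| ≤ m`. -/
def GeneratedInDegreesLE (N : FSObjᵒᵖ ⥤ ModuleCat ℚ) (m : ℕ) : Prop :=
  ∀ E : FSObj, Submodule.span ℚ
    {x : N.obj (op E) | ∃ (F : FSObj) (φ : E ⟶ F) (y : N.obj (op F)),
      Fintype.card F.carrier ≤ m ∧ x = N.map φ.op y} = ⊤

/-- The type of functions `E → S` that are not identically zero
(for `S` a finite set of reals). -/
def NzFun (S : Finset ℝ) (E : FSObj) : Type :=
  {v : E.carrier → S // ∃ e, (v e : ℝ) ≠ 0}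

/-- Pullback of a not-identically-zero function along a surjection is
not identically zero. -/
def NzFun.pullback (S : Finset ℝ) {E F : FSObj} (φ : E ⟶ F) (w : NzFun S F) :
    NzFun S E :=
  ⟨w.1 ∘ φ.1, by
    obtain ⟨f, hf⟩ := w.2
    obtain ⟨e, he⟩ := φ.2 f
    exact ⟨e, by simp only [Function.comp_apply, he]; exact hf⟩⟩

/-- The `FSᵒᵖ`-module sending a nonempty finite type `E` to the free `ℚ`-vector
space on the set of not-identically-zero functions `v : E → S`, with pullback along
a surjection `φ : E → F` sending a basis element `w` to `w ∘ φ`. -/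
noncomputable def resMod (S : Finset ℝ) : FSObjᵒᵖ ⥤ ModuleCat ℚ where
  obj E := ModuleCat.of ℚ (NzFun S (unop E) →₀ ℚ)
  map {E E'} φ := ModuleCat.ofHom (Finsupp.lmapDomain ℚ ℚ (NzFun.pullback S φ.unop))
  map_id E := by
    show ModuleCat.ofHom (Finsupp.lmapDomain ℚ ℚ (NzFun.pullback S (𝟙 E : E ⟶ E).unop)) = _
    have h : NzFun.pullback S (𝟙 E : E ⟶ E).unop = id := by
      funext w; exact Subtype.ext rfl
    rw [h, Finsupp.lmapDomain_id]; rfl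
  map_comp {E E' E''} φ φ' := by
    show ModuleCat.ofHom (Finsupp.lmapDomain ℚ ℚ (NzFun.pullback S (φ ≫ φ').unop)) = _
    have h : NzFun.pullback S (φ ≫ φ').unop =
        NzFun.pullback S φ'.unop ∘ NzFun.pullback S φ.unop := by
      funext w; exact Subtype.ext rfl
    rw [h, Finsupp.lmapDomain_comp]; rfl

/-!
The tensor power `N(E)^{⊗ i}` is spanned by the tensors `w₁ ⊗ ⋯ ⊗ w_i` of basis vectors
`w_j : E → S`. Every such tensor is pulled back along the surjection of `E` onto the image of
`e ↦ (w₁ e, …, w_i e)`, a subset of `S^i` and hence of size at most `|S|^i`.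
-/

namespace FSObj

variable {E : FSObj} {α : Type}

noncomputable def range (f : E.carrier → α) : FSObj where
  carrier := Set.range f
  fintype := Fintype.ofFinite _
  nonempty := (Set.range_nonempty f).to_subtype

def toRange (f : E.carrier → α) : E ⟶ range f :=
  ⟨Set.rangeFactorization f, Set.rangeFactorization_surjective⟩

theorem card_range_le [Fintype α] (f : E.carrier → α) :
    Fintype.card (range f).carrier ≤ Fintype.card α :=
  Fintype.card_le_of_injective Subtype.val Subtype.val_injective

end FSObj

theorem NzFun.exists_pullback_of_card_le {ι : Type} [Fintype ι] (S : Finset ℝ) {E : FSObj}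
    (r : ι → NzFun S E) :
    ∃ (F : FSObj) (φ : E ⟶ F) (w : ι → NzFun S F),
      Fintype.card F.carrier ≤ S.card ^ Fintype.card ι ∧ ∀ j, NzFun.pullback S φ (w j) = r j := by
  classical
  let Φ : E.carrier → (ι → S) := fun e j => (r j).1 e
  have hw : ∀ j, ∃ p : (FSObj.range Φ).carrier, (p.1 j : ℝ) ≠ 0 := fun j =>
    let ⟨e, he⟩ := (r j).2
    ⟨(FSObj.toRange Φ).1 e, he⟩
  refine ⟨FSObj.range Φ, FSObj.toRange Φ, fun j => ⟨fun p => p.1 j, hw j⟩, ?_,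
    fun j => Subtype.ext rfl⟩
  simpa using FSObj.card_range_le Φ

theorem resMod_map_single (S : Finset ℝ) {E F : FSObj} (φ : E ⟶ F) (w : NzFun S F) (c : ℚ) :
    (resMod S).map φ.op (Finsupp.single w c) = Finsupp.single (NzFun.pullback S φ w) c :=
  Finsupp.mapDomain_single

open scoped TensorProduct in
theorem stmt_9_general (S : Finset ℝ) (i : ℕ) (E : FSObj) :
    Submodule.span ℚ
      {z : ⨂[ℚ] (_ : Fin i), (resMod S).obj (op E) |
        ∃ (F : FSObj) (φ : E ⟶ F) (y : Fin i → (resMod S).obj (op F)),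
          Fintype.card F.carrier ≤ S.card ^ i ∧
          z = PiTensorProduct.tprod ℚ (fun j => (resMod S).map φ.op (y j))} = ⊤ := by
  let b : Module.Basis (Fin i → NzFun S E) ℚ (⨂[ℚ] (_ : Fin i), (resMod S).obj (op E)) :=
    Basis.piTensorProduct fun _ => Finsupp.basisSingleOne
  rw [eq_top_iff, ← b.span_eq, Submodule.span_le]
  rintro _ ⟨r, rfl⟩
  obtain ⟨F, φ, w, hcard, hw⟩ := NzFun.exists_pullback_of_card_le S r
  refine Submodule.subset_span ⟨F, φ, fun j => Finsupp.single (w j) 1, by simpa using hcard, ?_⟩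
  refine (Basis.piTensorProduct_apply _ r).trans (congrArg _ (funext fun j => ?_))
  rw [resMod_map_single, hw]
  rfl

open scoped TensorProduct in
/-- the `i`-th pointwise tensor power of the module `N` with `N(E)`
free on the nonzero elements of `S^E` is generated in degrees `≤ |S|^i`
(each tensor power being moreover finite-dimensional). -/
theorem stmt_9 (S : Finset ℝ) (i : ℕ) (hi : 1 ≤ i) (E : FSObj) :
    Submodule.span ℚ
      {z : ⨂[ℚ] (_ : Fin i), (resMod S).obj (op E) |
        ∃ (F : FSObj) (φ : E ⟶ F) (y : Fin i → (resMod S).obj (op F)),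
          Fintype.card F.carrier ≤ S.card ^ i ∧
          z = PiTensorProduct.tprod ℚ (fun j => (resMod S).map φ.op (y j))} = ⊤ :=
  stmt_9_general S i E
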